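/- arXiv:2405.15070 — 2 statements merged into one kernel-verified Lean document; each statement's English description precedes it below -/
import Mathlib

section
/- The smoothed weighted coverage function f is submodular: for all subsets X ⊆ Y of Ω and all z ∈ Ω \ Y, f(X ∪ {z}) − f(X) ≥ f(Y ∪ {z}) − f(Y). -/
/-- Sort the values of a multiset of reals in nonincreasing order. -/
noncomputable def descSort (s : Multiset ℝ) : List ℝ :=
  (s.sort (· ≤ ·)).reverse

/-- `∑_j λ^j * l_j` for a list `l` (0-based exponents). -/
noncomputable def smoothSum (lam : ℝ) (l : List ℝ) : ℝ :=
  ∑ j ∈ Finset.range l.length, lam ^ j * l.getD j 0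

/-- The smoothed weighted coverage function:
`f(Z) = ∑_{n<N} ∑_j λ^{j} v^{(n)}(z_{g^{(n)}(j)})` where for each aspect `n` the
values `v^{(n)}(z)`, `z ∈ Z`, are sorted nonincreasingly. -/
noncomputable def smoothCov {Ω : Type*} (lam : ℝ) (N : ℕ) (v : Ω → ℕ → ℝ)
    (Z : Finset Ω) : ℝ :=
  ∑ n ∈ Finset.range N, smoothSum lam (descSort (Z.val.map (fun z => v z n)))

lemma smoothSum_nil (lam : ℝ) : smoothSum lam [] = 0 := by simp [smoothSum]

lemma smoothSum_cons (lam x : ℝ) (l : List ℝ) :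
    smoothSum lam (x :: l) = x + lam * smoothSum lam l := by
  unfold smoothSum
  rw [List.length_cons, Finset.sum_range_succ', Finset.mul_sum]
  simp only [List.getD_cons_succ, List.getD_cons_zero, pow_zero, one_mul]
  rw [add_comm]
  congr 1
  exact Finset.sum_congr rfl fun j _ => by ring

lemma descSort_sorted (s : Multiset ℝ) : (descSort s).Pairwise (· ≥ ·) := by
  rw [descSort, List.pairwise_reverse]
  exact Multiset.pairwise_sort s (· ≤ ·)

lemma descSort_coe (s : Multiset ℝ) : ((descSort s : List ℝ) : Multiset ℝ) = s := by
  rw [descSort, ← Multiset.coe_reverse, List.reverse_reverse, Multiset.sort_eq]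

lemma mem_descSort {x : ℝ} {s : Multiset ℝ} : x ∈ descSort s ↔ x ∈ s := by
  rw [← Multiset.mem_coe, descSort_coe]

lemma descSort_cons (a : ℝ) (s : Multiset ℝ) :
    descSort (a ::ₘ s) = (descSort s).orderedInsert (· ≥ ·) a := by
  apply List.Perm.eq_of_pairwise' (r := (· ≥ ·)) (descSort_sorted _)
    ((descSort_sorted s).orderedInsert a _) ?_
  rw [← Multiset.coe_eq_coe, descSort_coe]
  have := (List.perm_orderedInsert (· ≥ ·) a (descSort s)).symm
  rw [← Multiset.coe_eq_coe] at this
  rw [← this, ← Multiset.cons_coe, descSort_coe]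

lemma smoothSum_nonneg (lam : ℝ) (hlam0 : 0 ≤ lam) (l : List ℝ)
    (h : ∀ x ∈ l, 0 ≤ x) : 0 ≤ smoothSum lam l := by
  induction l with
  | nil => simp [smoothSum_nil]
  | cons x l ih =>
    rw [smoothSum_cons]
    have hx := h x (List.mem_cons_self)
    have hS := ih fun y hy => h y (List.mem_cons_of_mem x hy)
    nlinarith

lemma smoothSum_bound (lam a : ℝ) (hlam0 : 0 ≤ lam) (hlam1 : lam ≤ 1) (ha : 0 ≤ a)
    (l : List ℝ) (h : ∀ x ∈ l, 0 ≤ x ∧ x ≤ a) : (1 - lam) * smoothSum lam l ≤ a := by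
  induction l with
  | nil => simpa [smoothSum_nil] using ha
  | cons x l ih =>
    rw [smoothSum_cons]
    obtain ⟨hx0, hxa⟩ := h x (List.mem_cons_self)
    have hl : ∀ y ∈ l, 0 ≤ y ∧ y ≤ a := fun y hy => h y (List.mem_cons_of_mem x hy)
    have hS := ih hl
    have hS0 := smoothSum_nonneg lam hlam0 l fun y hy => (hl y hy).1
    nlinarith [mul_nonneg (sub_nonneg.2 hlam1) (sub_nonneg.2 hxa),
      mul_nonneg hlam0 (sub_nonneg.2 hS)]

/-- The marginal gain from inserting `a` into the sorted list `l`. -/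
noncomputable def marg (lam a : ℝ) (l : List ℝ) : ℝ :=
  smoothSum lam (l.orderedInsert (· ≥ ·) a) - smoothSum lam l

lemma marg_nil (lam a : ℝ) : marg lam a [] = a := by
  simp [marg, smoothSum_cons, smoothSum_nil]

lemma marg_cons_of_lt (lam a x : ℝ) (l : List ℝ) (h : ¬ a ≥ x) :
    marg lam a (x :: l) = lam * marg lam a l := by
  rw [marg, marg, List.orderedInsert, if_neg h, smoothSum_cons, smoothSum_cons]; ring

lemma marg_cons_of_ge (lam a x : ℝ) (l : List ℝ) (h : a ≥ x) :
    marg lam a (x :: l) = a - (1 - lam) * smoothSum lam (x :: l) := by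
  rw [marg, List.orderedInsert, if_pos h, smoothSum_cons]; ring

lemma marg_nonneg (lam a : ℝ) (hlam0 : 0 ≤ lam) (hlam1 : lam ≤ 1) (ha : 0 ≤ a)
    (l : List ℝ) (hs : l.Pairwise (· ≥ ·)) (h : ∀ x ∈ l, 0 ≤ x) : 0 ≤ marg lam a l := by
  induction l with
  | nil => rw [marg_nil]; exact ha
  | cons x l ih =>
    rw [List.pairwise_cons] at hs
    by_cases hax : a ≥ x
    · rw [marg_cons_of_ge lam a x l hax]
      have hb : (1 - lam) * smoothSum lam (x :: l) ≤ a := by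
        apply smoothSum_bound lam a hlam0 hlam1 ha
        intro y hy
        rcases List.mem_cons.1 hy with rfl | hy
        · exact ⟨h y (List.mem_cons_self), hax⟩
        · exact ⟨h y (List.mem_cons_of_mem x hy), le_trans (hs.1 y hy) hax⟩
      linarith
    · rw [marg_cons_of_lt lam a x l hax]
      exact mul_nonneg hlam0 (ih hs.2 fun y hy => h y (List.mem_cons_of_mem x hy))

lemma marg_orderedInsert_le (lam a b : ℝ) (hlam0 : 0 ≤ lam) (hlam1 : lam ≤ 1)
    (ha : 0 ≤ a) (hb : 0 ≤ b) (l : List ℝ) (hs : l.Pairwise (· ≥ ·))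
    (h : ∀ x ∈ l, 0 ≤ x) :
    marg lam a (l.orderedInsert (· ≥ ·) b) ≤ marg lam a l := by
  induction l with
  | nil =>
    rw [List.orderedInsert_nil, marg_nil]
    by_cases hab : a ≥ b
    · rw [marg_cons_of_ge lam a b [] hab, smoothSum_cons, smoothSum_nil]
      nlinarith
    · rw [marg_cons_of_lt lam a b [] hab, marg_nil]
      nlinarith
  | cons x l ih =>
    rw [List.pairwise_cons] at hs
    have hl0 : ∀ y ∈ l, 0 ≤ y := fun y hy => h y (List.mem_cons_of_mem x hy)
    have hx0 : 0 ≤ x := h x (List.mem_cons_self)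
    by_cases hbx : b ≥ x
    · rw [List.orderedInsert, if_pos hbx]
      by_cases hab : a ≥ b
      · have hax : a ≥ x := le_trans hbx hab
        rw [marg_cons_of_ge lam a b (x :: l) hab, marg_cons_of_ge lam a x l hax,
          smoothSum_cons lam b (x :: l)]
        have hbd : (1 - lam) * smoothSum lam (x :: l) ≤ b := by
          apply smoothSum_bound lam b hlam0 hlam1 hb
          intro y hy
          rcases List.mem_cons.1 hy with rfl | hy
          · exact ⟨hx0, hbx⟩
          · exact ⟨hl0 y hy, le_trans (hs.1 y hy) hbx⟩
        nlinarith
      · rw [marg_cons_of_lt lam a b (x :: l) hab]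
        have hm := marg_nonneg lam a hlam0 hlam1 ha (x :: l)
          (List.pairwise_cons.2 hs) h
        nlinarith
    · rw [List.orderedInsert, if_neg hbx]
      by_cases hax : a ≥ x
      · rw [marg_cons_of_ge lam a x _ hax, marg_cons_of_ge lam a x l hax,
          smoothSum_cons, smoothSum_cons]
        have hm : 0 ≤ marg lam b l :=
          marg_nonneg lam b hlam0 hlam1 hb l hs.2 hl0
        rw [marg] at hm
        nlinarith [mul_nonneg (mul_nonneg (sub_nonneg.2 hlam1) hlam0) hm]
      · rw [marg_cons_of_lt lam a x _ hax, marg_cons_of_lt lam a x l hax]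
        exact mul_le_mul_of_nonneg_left (ih hs.2 hl0) hlam0

lemma diff_le (lam a : ℝ) (hlam0 : 0 ≤ lam) (hlam1 : lam ≤ 1) (ha : 0 ≤ a)
    (s : Multiset ℝ) (hsn : ∀ x ∈ s, 0 ≤ x) (u : Multiset ℝ) (hun : ∀ x ∈ u, 0 ≤ x) :
    smoothSum lam (descSort (a ::ₘ (s + u))) - smoothSum lam (descSort (s + u)) ≤
      smoothSum lam (descSort (a ::ₘ s)) - smoothSum lam (descSort s) := by
  induction u using Multiset.induction_on with
  | empty => simp
  | cons b u ih =>
    have hb : 0 ≤ b := hun b (Multiset.mem_cons_self b u)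
    have hun' : ∀ x ∈ u, 0 ≤ x := fun x hx => hun x (Multiset.mem_cons_of_mem hx)
    have hsu : ∀ x ∈ s + u, 0 ≤ x := by
      intro x hx
      rcases Multiset.mem_add.1 hx with hx | hx
      · exact hsn x hx
      · exact hun' x hx
    calc smoothSum lam (descSort (a ::ₘ (s + b ::ₘ u))) -
            smoothSum lam (descSort (s + b ::ₘ u))
        = marg lam a (descSort (b ::ₘ (s + u))) := by
          rw [show s + b ::ₘ u = b ::ₘ (s + u) by
            rw [← Multiset.singleton_add, ← Multiset.singleton_add, add_left_comm],
            descSort_cons a, marg]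
      _ ≤ marg lam a (descSort (s + u)) := by
          rw [descSort_cons b]
          exact marg_orderedInsert_le lam a b hlam0 hlam1 ha hb _ (descSort_sorted _)
            fun x hx => hsu x (mem_descSort.1 hx)
      _ = smoothSum lam (descSort (a ::ₘ (s + u))) - smoothSum lam (descSort (s + u)) := by
          rw [descSort_cons a, marg]
      _ ≤ _ := ih hun'

/-- the smoothed weighted coverage function is submodular. -/
theorem smoothCov_submodular {Ω : Type*} [DecidableEq Ω] (lam : ℝ)
    (hlam0 : 0 ≤ lam) (hlam1 : lam ≤ 1) (N : ℕ) (v : Ω → ℕ → ℝ)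
    (hv : ∀ z n, 0 ≤ v z n)
    (X Y : Finset Ω) (hXY : X ⊆ Y) (z : Ω) (hz : z ∉ Y) :
    smoothCov lam N v (insert z Y) - smoothCov lam N v Y ≤
      smoothCov lam N v (insert z X) - smoothCov lam N v X := by
  have hzX : z ∉ X := fun h => hz (hXY h)
  unfold smoothCov
  rw [← Finset.sum_sub_distrib, ← Finset.sum_sub_distrib]
  apply Finset.sum_le_sum
  intro n _
  have hY : (insert z Y).val = z ::ₘ Y.val := Finset.insert_val_of_notMem hz
  have hX : (insert z X).val = z ::ₘ X.val := Finset.insert_val_of_notMem hzX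
  rw [hY, hX, Multiset.map_cons, Multiset.map_cons]
  obtain ⟨u, hu⟩ := Multiset.le_iff_exists_add.1
    (Multiset.map_le_map (Finset.val_le_iff.2 hXY) (f := fun z => v z n))
  rw [hu]
  apply diff_le lam (v z n) hlam0 hlam1 (hv z n)
  · intro x hx
    obtain ⟨y, _, rfl⟩ := Multiset.mem_map.1 hx
    exact hv y n
  · intro x hx
    have : x ∈ Multiset.map (fun z => v z n) Y.val := by
      rw [hu]; exact Multiset.mem_add.2 (Or.inr hx)
    obtain ⟨y, _, rfl⟩ := Multiset.mem_map.1 this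
    exact hv y n
end

section
/- For a monotone submodular function f with f(∅) = 0, the standard greedy algorithm that iteratively adds z* = argmax_{z ∉ Z} f(Z ∪ {z}) produces after k steps a set Z_k with f(Z_k) ≥ (1 − (1 − 1/k)^k) · max_{|Z̄| = k} f(Z̄) ≥ (1 − 1/e) · max_{|Z̄| = k} f(Z̄). -/
/-- the standard greedy algorithm for a nonnegative monotone
submodular function with `f(∅) = 0` achieves the factor `1 - (1 - 1/k)^k`,
which is at least `1 - 1/e`, of the optimal size-`k` value. -/
theorem greedy_one_sub_inv_e {Ω : Type*} [DecidableEq Ω] (f : Finset Ω → ℝ)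
    (hnn : ∀ Z : Finset Ω, 0 ≤ f Z) (hempty : f ∅ = 0)
    (hmono : ∀ X Y : Finset Ω, X ⊆ Y → f X ≤ f Y)
    (hsub : ∀ X Y : Finset Ω, X ⊆ Y → ∀ z ∉ Y,
      f (insert z Y) - f Y ≤ f (insert z X) - f X)
    (k : ℕ) (hk : 0 < k) (c : ℕ → Ω)
    (hnew : ∀ i < k, c i ∉ (Finset.range i).image c)
    (hgreedy : ∀ i < k, ∀ z ∉ (Finset.range i).image c,
      f (insert z ((Finset.range i).image c)) ≤
        f (insert (c i) ((Finset.range i).image c)))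
    (Z' : Finset Ω) (hZ' : Z'.card = k) :
    (1 - (1 - 1 / (k : ℝ)) ^ k) * f Z' ≤ f ((Finset.range k).image c) ∧
    (1 - 1 / Real.exp 1) * f Z' ≤ f ((Finset.range k).image c) := by
  set Z : ℕ → Finset Ω := fun i => (Finset.range i).image c with hZdef
  have hkR : (0:ℝ) < (k:ℝ) := by exact_mod_cast hk
  have hkR1 : (1:ℝ) ≤ (k:ℝ) := by exact_mod_cast hk
  have hfac : (0:ℝ) ≤ 1 - 1 / (k:ℝ) := by
    have : 1 / (k:ℝ) ≤ 1 := by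
      rw [div_le_one hkR]; exact hkR1
    linarith
  -- submodular sum bound
  have hsum : ∀ (A s : Finset Ω), Disjoint A s →
      f (A ∪ s) - f A ≤ ∑ z ∈ s, (f (insert z A) - f A) := by
    intro A s
    induction s using Finset.induction_on with
    | empty => simp
    | @insert a t ha ih =>
      intro hd
      have hdt : Disjoint A t := hd.mono_right (Finset.subset_insert _ _)
      have haA : a ∉ A := by
        intro hmem
        exact (Finset.disjoint_left.mp hd) hmem (Finset.mem_insert_self _ _)
      have haAt : a ∉ A ∪ t := by
        simp [haA, ha]
      have h1 : f (insert a (A ∪ t)) - f (A ∪ t) ≤ f (insert a A) - f A :=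
        hsub A (A ∪ t) (Finset.subset_union_left) a haAt
      have h2 := ih hdt
      have h3 : A ∪ insert a t = insert a (A ∪ t) := by
        ext x; simp [or_left_comm, or_comm, or_assoc]
      rw [h3, Finset.sum_insert ha]
      linarith
  -- Z (i+1) = insert (c i) (Z i)
  have hZsucc : ∀ i, Z (i+1) = insert (c i) (Z i) := by
    intro i
    simp [hZdef, Finset.range_add_one]
  -- greedy step bound
  have step : ∀ i < k, f Z' - f (Z (i+1)) ≤ (1 - 1/(k:ℝ)) * (f Z' - f (Z i)) := by
    intro i hi
    set A := Z i with hA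
    have hmarg : ∀ z ∈ Z' \ A, f (insert z A) - f A ≤ f (Z (i+1)) - f A := by
      intro z hz
      have hzA : z ∉ A := (Finset.mem_sdiff.mp hz).2
      have := hgreedy i hi z hzA
      rw [hZsucc i]
      have : f (insert z A) ≤ f (insert (c i) A) := this
      linarith
    have hM : 0 ≤ f (Z (i+1)) - f A := by
      have : A ⊆ Z (i+1) := by rw [hZsucc i]; exact Finset.subset_insert _ _
      have := hmono A (Z (i+1)) this
      linarith
    have h1 : f Z' ≤ f (A ∪ (Z' \ A)) := by
      apply hmono
      intro x hx
      by_cases hxa : x ∈ A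
      · exact Finset.mem_union_left _ hxa
      · exact Finset.mem_union_right _ (Finset.mem_sdiff.mpr ⟨hx, hxa⟩)
    have h2 := hsum A (Z' \ A) (Finset.disjoint_sdiff)
    have h3 : ∑ z ∈ Z' \ A, (f (insert z A) - f A) ≤
        (Z' \ A).card * (f (Z (i+1)) - f A) := by
      calc ∑ z ∈ Z' \ A, (f (insert z A) - f A)
          ≤ ∑ _z ∈ Z' \ A, (f (Z (i+1)) - f A) := Finset.sum_le_sum hmarg
        _ = (Z' \ A).card * (f (Z (i+1)) - f A) := by
            rw [Finset.sum_const, nsmul_eq_mul]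
    have hcard : ((Z' \ A).card : ℝ) ≤ (k:ℝ) := by
      have : (Z' \ A).card ≤ Z'.card := Finset.card_le_card (Finset.sdiff_subset)
      exact_mod_cast this.trans_eq hZ'
    have h4 : f Z' - f A ≤ (k:ℝ) * (f (Z (i+1)) - f A) := by
      have := mul_le_mul_of_nonneg_right hcard hM
      linarith
    have hne : (k:ℝ) ≠ 0 := ne_of_gt hkR
    have hdiv : (f Z' - f A) / (k:ℝ) ≤ f (Z (i+1)) - f A := by
      rw [div_le_iff₀ hkR]
      linarith [h4]
    have expand : (1 - 1/(k:ℝ)) * (f Z' - f A) = (f Z' - f A) - (f Z' - f A) / (k:ℝ) := by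
      field_simp
    rw [expand]
    linarith
  -- gap induction
  have gap : ∀ i ≤ k, f Z' - f (Z i) ≤ (1 - 1/(k:ℝ))^i * f Z' := by
    intro i
    induction i with
    | zero =>
      intro _
      have : Z 0 = ∅ := by simp [hZdef]
      rw [this, hempty]
      simp
    | succ n ih =>
      intro hn
      have hnk : n < k := hn
      have h1 := ih (le_of_lt hnk)
      have h2 := step n hnk
      calc f Z' - f (Z (n+1)) ≤ (1 - 1/(k:ℝ)) * (f Z' - f (Z n)) := h2
        _ ≤ (1 - 1/(k:ℝ)) * ((1 - 1/(k:ℝ))^n * f Z') :=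
            mul_le_mul_of_nonneg_left h1 hfac
        _ = (1 - 1/(k:ℝ))^(n+1) * f Z' := by ring
  have main := gap k le_rfl
  have first : (1 - (1 - 1 / (k : ℝ)) ^ k) * f Z' ≤ f (Z k) := by nlinarith [main]
  refine ⟨first, ?_⟩
  -- (1-1/k)^k ≤ 1/e
  have hexp : (1 - 1/(k:ℝ))^k ≤ 1 / Real.exp 1 := by
    have h1 : (1 - 1/(k:ℝ)) ≤ Real.exp (-(1/(k:ℝ))) := by
      have := Real.add_one_le_exp (-(1/(k:ℝ)))
      linarith
    have h2 : (1 - 1/(k:ℝ))^k ≤ (Real.exp (-(1/(k:ℝ))))^k :=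
      pow_le_pow_left₀ hfac h1 k
    have h3 : (Real.exp (-(1/(k:ℝ))))^k = Real.exp ((k:ℝ) * (-(1/(k:ℝ)))) :=
      (Real.exp_nat_mul _ k).symm
    have h4 : (k:ℝ) * (-(1/(k:ℝ))) = -1 := by
      field_simp
    rw [h3, h4] at h2
    rw [Real.exp_neg] at h2
    rw [one_div]
    simpa using h2
  have hle : (1 - 1 / Real.exp 1) * f Z' ≤ (1 - (1 - 1 / (k : ℝ)) ^ k) * f Z' := by
    apply mul_le_mul_of_nonneg_right _ (hnn Z')
    linarith
  linarith
end
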